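/- Let ω ≠ 0 and let φ : ℝ^n → ℂ^N be a Schwartz-class solution of the stationary nonlinear Dirac equation ℒ₋φ = 0. Then the momentum of the standing wave vanishes: for each 1 ≤ k ≤ n, ∫_{ℝ^n} φ*(x) α_k φ(x) dx = 0. Indeed, 2ω ∫ φ*α_kφ dx = -i ∫ ∂_k(φ*φ) dx = 0. -/

import Mathlib

open MeasureTheory

/-- Partial derivative of `f` in the `j`-th coordinate direction. -/
noncomputable def pderiv' {n : ℕ} {E : Type*} [NormedAddCommGroup E] [NormedSpace ℝ E]
    (j : Fin n) (f : (Fin n → ℝ) → E) (x : Fin n → ℝ) : E :=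
  fderiv ℝ f x (Pi.single j 1)

/-- `φ*βφ`, the (real) scalar density of the Soler model. -/
noncomputable def solerDensity {n N : ℕ} (β : Matrix (Fin N) (Fin N) ℂ)
    (φ : (Fin n → ℝ) → Fin N → ℂ) (x : Fin n → ℝ) : ℝ :=
  (dotProduct (star (φ x)) (β.mulVec (φ x))).re

/-- The operator `ℒ₋ψ = -i∑_j α_j ∂_jψ - ωψ + g(φ*βφ)βψ`. -/
noncomputable def diracLminus {n N : ℕ}
    (α : Fin n → Matrix (Fin N) (Fin N) ℂ) (β : Matrix (Fin N) (Fin N) ℂ)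
    (g : ℝ → ℝ) (ω : ℝ)
    (φ ψ : (Fin n → ℝ) → Fin N → ℂ) (x : Fin n → ℝ) : Fin N → ℂ :=
  (-Complex.I) • (∑ j : Fin n, (α j).mulVec (pderiv' j ψ x))
    - (ω : ℂ) • ψ x
    + (g (solerDensity β φ x) : ℂ) • β.mulVec (ψ x)

/-- The linearization `ℒψ = ℒ₋ψ + 2g'(φ*βφ) Re(φ*βψ) βφ`. -/
noncomputable def diracL {n N : ℕ}
    (α : Fin n → Matrix (Fin N) (Fin N) ℂ) (β : Matrix (Fin N) (Fin N) ℂ)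
    (g : ℝ → ℝ) (ω : ℝ)
    (φ ψ : (Fin n → ℝ) → Fin N → ℂ) (x : Fin n → ℝ) : Fin N → ℂ :=
  diracLminus α β g ω φ ψ x
    + ((2 * deriv g (solerDensity β φ x)
        * (dotProduct (star (φ x)) (β.mulVec (ψ x))).re : ℝ) : ℂ)
      • β.mulVec (φ x)

/-! ### Auxiliary material -/

noncomputable section AuxStmt18

lemma schwartz_hasTemperateGrowth {E F : Type*} [NormedAddCommGroup E] [NormedSpace ℝ E]
    [NormedAddCommGroup F] [NormedSpace ℝ F] (f : SchwartzMap E F) :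
    Function.HasTemperateGrowth ⇑f := by
  refine ⟨f.smooth', fun n => ⟨0, SchwartzMap.seminorm ℝ 0 n f, fun x => ?_⟩⟩
  simpa using f.le_seminorm ℝ 0 n x

variable {n N : ℕ}

/-- Projection onto a coordinate, as an `ℝ`-linear CLM. -/
def projC (N : ℕ) (i : Fin N) : (Fin N → ℂ) →L[ℝ] ℂ := ContinuousLinearMap.proj i

/-- The (bilinear, non-sesquilinear) dot product as a CLM. -/
def dotCLM (N : ℕ) : (Fin N → ℂ) →L[ℝ] (Fin N → ℂ) →L[ℝ] ℂ :=
  ∑ i : Fin N,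
    ((((ContinuousLinearMap.mul ℝ ℂ).comp (projC N i)).flip.comp (projC N i)).flip)

lemma dotCLM_apply (u v : Fin N → ℂ) : dotCLM N u v = dotProduct u v := by
  simp [dotCLM, dotProduct, projC, ContinuousLinearMap.sum_apply]

/-- Matrix multiplication as an `ℝ`-linear CLM. -/
def mulVecCLM (A : Matrix (Fin N) (Fin N) ℂ) : (Fin N → ℂ) →L[ℝ] (Fin N → ℂ) :=
  (LinearMap.toContinuousLinearMap A.mulVecLin).restrictScalars ℝ

lemma mulVecCLM_apply (A : Matrix (Fin N) (Fin N) ℂ) (u : Fin N → ℂ) :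
    mulVecCLM A u = A.mulVec u := rfl

/-- Componentwise complex conjugation as an `ℝ`-linear CLM. -/
def starCLM (N : ℕ) : (Fin N → ℂ) →L[ℝ] (Fin N → ℂ) :=
  ContinuousLinearMap.pi fun i =>
    (Complex.conjCLE.toContinuousLinearMap).comp (ContinuousLinearMap.proj i)

lemma starCLM_apply (u : Fin N → ℂ) : starCLM N u = star u := rfl

/-- The sesquilinear form `(u, v) ↦ (A u) ⬝ᵥ star v`, `ℝ`-bilinear. -/
def BA (A : Matrix (Fin N) (Fin N) ℂ) :
    (Fin N → ℂ) →L[ℝ] (Fin N → ℂ) →L[ℝ] ℂ :=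
  (((dotCLM N).comp (mulVecCLM A)).flip.comp (starCLM N)).flip

lemma BA_apply (A : Matrix (Fin N) (Fin N) ℂ) (u v : Fin N → ℂ) :
    BA A u v = dotProduct (A.mulVec u) (star v) := by
  simp [BA, dotCLM_apply, mulVecCLM_apply, starCLM_apply]

/-- Scalar multiplication `(z, r) ↦ r • z` as a CLM. -/
def smulCLM : ℂ →L[ℝ] ℝ →L[ℝ] ℂ :=
  (ContinuousLinearMap.lsmul ℝ ℝ : ℝ →L[ℝ] ℂ →L[ℝ] ℂ).flip

lemma smulCLM_apply (z : ℂ) (r : ℝ) : smulCLM z r = r • z := rfl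

lemma pderiv_bilin {E F G : Type*} [NormedAddCommGroup E] [NormedSpace ℝ E]
    [NormedAddCommGroup F] [NormedSpace ℝ F] [NormedAddCommGroup G] [NormedSpace ℝ G]
    (B : E →L[ℝ] F →L[ℝ] G) {f : (Fin n → ℝ) → E} {g : (Fin n → ℝ) → F}
    {f' : (Fin n → ℝ) →L[ℝ] E} {g' : (Fin n → ℝ) →L[ℝ] F} {x : Fin n → ℝ} (j : Fin n)
    (hf : HasFDerivAt f f' x) (hg : HasFDerivAt g g' x) :
    pderiv' j (fun y => B (f y) (g y)) x
      = B (f' (Pi.single j 1)) (g x) + B (f x) (g' (Pi.single j 1)) := by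
  have H : HasFDerivAt (fun y => B (f y) (g y))
      ((B.isBoundedBilinearMap.deriv (f x, g x)).comp (f'.prod g')) x :=
    HasFDerivAt.comp (g := fun p : E × F => B p.1 p.2) x
      (B.isBoundedBilinearMap.hasFDerivAt (f x, g x)) (hf.prodMk hg)
  rw [pderiv', H.fderiv]
  simp [IsBoundedBilinearMap.deriv_apply]
  abel

/-- The integral of a partial derivative of a Schwartz function vanishes. -/
lemma integral_pderiv (f : SchwartzMap (Fin n → ℝ) ℂ) (j : Fin n) :
    ∫ x : Fin n → ℝ, pderiv' j ⇑f x = 0 := by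
  have hfd : Integrable (fderiv ℝ ⇑f) (volume : Measure (Fin n → ℝ)) := by
    have := (SchwartzMap.fderivCLM ℝ _ _ f).integrable (μ := volume)
    exact this
  have key := VectorFourier.fourierIntegral_fderiv
    (L := (0 : (Fin n → ℝ) →L[ℝ] (Fin n → ℝ) →L[ℝ] ℝ)) (μ := volume)
    f.integrable f.differentiable hfd
  have h0 : (∫ x : Fin n → ℝ, fderiv ℝ ⇑f x) = 0 := by
    have h1 := congrFun key 0
    have hz : ∀ z : ℂ, (ContinuousLinearMap.smulRight (0 : (Fin n → ℝ) →L[ℝ] ℝ) z) = 0 := by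
      intro z; ext y; simp
    simpa [VectorFourier.fourierIntegral, VectorFourier.fourierSMulRight, hz] using h1
  have h2 := ContinuousLinearMap.integral_apply (𝕜 := ℝ) hfd (Pi.single j (1:ℝ))
  rw [h0] at h2
  simpa [pderiv'] using h2.symm

lemma sum_dotProduct' {ι : Type*} (s : Finset ι) (u : ι → Fin N → ℂ) (v : Fin N → ℂ) :
    dotProduct (∑ j ∈ s, u j) v = ∑ j ∈ s, dotProduct (u j) v := by
  simp only [dotProduct, Finset.sum_apply, Finset.sum_mul]
  rw [Finset.sum_comm]

/-- The key conjugation identity for Hermitian matrices. -/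
lemma star_dot_herm {M : Matrix (Fin N) (Fin N) ℂ} (hM : M.IsHermitian)
    (w z : Fin N → ℂ) :
    star (dotProduct (M.mulVec w) (star z))
      = dotProduct (M.mulVec z) (star w) := by
  simp only [dotProduct, Matrix.mulVec, star_sum, star_mul', Pi.star_apply, star_star,
    Finset.sum_mul, Finset.mul_sum]
  rw [Finset.sum_comm]
  refine Finset.sum_congr rfl fun l _ => Finset.sum_congr rfl fun i _ => ?_
  rw [hM.apply]
  ring

end AuxStmt18

/-- for `ω ≠ 0` and a Schwartz-class solution `φ` of `ℒ₋φ = 0`, the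
momentum of the standing wave vanishes: `∫ φ*α_kφ dx = 0` for each `k`.  Indeed,
`2ω∫φ*α_kφ dx = -i∫∂_k(φ*φ) dx = 0`. -/
theorem stmt_18 (n N : ℕ) (hn : 1 ≤ n) (hN : 1 ≤ N)
    (α : Fin n → Matrix (Fin N) (Fin N) ℂ) (β : Matrix (Fin N) (Fin N) ℂ)
    (hαherm : ∀ j, (α j).IsHermitian) (hβherm : β.IsHermitian)
    (hαα : ∀ j k, α j * α k + α k * α j
      = if j = k then (2 : ℂ) • (1 : Matrix (Fin N) (Fin N) ℂ) else 0)
    (hαβ : ∀ j, α j * β + β * α j = 0)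
    (hβ2 : β * β = 1)
    (g : ℝ → ℝ) (hg : ContDiff ℝ (⊤ : ℕ∞) g)
    (ω : ℝ) (hω : ω ≠ 0)
    (φ : SchwartzMap (Fin n → ℝ) (Fin N → ℂ))
    (hsol : ∀ x, diracLminus α β g ω (⇑φ) (⇑φ) x = 0) :
    ∀ k : Fin n,
      (∫ x : Fin n → ℝ, dotProduct (star (φ x)) ((α k).mulVec (φ x))) = 0
      ∧ ((2 * ω : ℝ) : ℂ)
          * (∫ x : Fin n → ℝ, dotProduct (star (φ x)) ((α k).mulVec (φ x)))
        = (-Complex.I)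
          * (∫ x : Fin n → ℝ,
              pderiv' k (fun y => dotProduct (star (φ y)) (φ y)) x)
      ∧ (∫ x : Fin n → ℝ,
          pderiv' k (fun y => dotProduct (star (φ y)) (φ y)) x) = 0 := by
  intro k
  classical
  have htemp := schwartz_hasTemperateGrowth φ
  -- the Schwartz functions `x ↦ (α j φ(x)) ⬝ᵥ star φ(x)`
  set F : Fin n → SchwartzMap (Fin n → ℝ) ℂ :=
    fun j => SchwartzMap.bilinLeftCLM (BA (α j)) htemp φ with hF
  have hFfun : ∀ j, ⇑(F j) = fun y => BA (α j) (φ y) (φ y) := fun j => rfl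
  have hFapp : ∀ j x, F j x = dotProduct ((α j).mulVec (φ x)) (star (φ x)) :=
    fun j x => BA_apply _ _ _
  -- pointwise vanishing of the divergence of the current
  have hdiv : ∀ x, ∑ j, pderiv' j ⇑(F j) x = 0 := by
    intro x
    have hφx : HasFDerivAt ⇑φ (fderiv ℝ ⇑φ x) x := φ.differentiableAt.hasFDerivAt
    set d : Fin n → Fin N → ℂ := fun j => pderiv' j (⇑φ) x with hd
    have hpd : ∀ j, pderiv' j ⇑(F j) x
        = dotProduct ((α j).mulVec (d j)) (star (φ x))
          + dotProduct ((α j).mulVec (φ x)) (star (d j)) := by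
      intro j
      rw [hFfun j, pderiv_bilin (BA (α j)) j hφx hφx, BA_apply, BA_apply]
      rfl
    set c : ℂ := (g (solerDensity β (⇑φ) x) : ℂ) with hc
    set S : Fin N → ℂ := ∑ j, (α j).mulVec (d j) with hSdef
    have heq := hsol x
    rw [diracLminus] at heq
    have h1 : (-Complex.I) • S = (ω:ℂ) • φ x - c • β.mulVec (φ x) := by
      rw [eq_sub_iff_add_eq]
      rwa [sub_add_eq_add_sub, sub_eq_zero] at heq
    have hS : S = Complex.I • ((ω:ℂ) • φ x - c • β.mulVec (φ x)) := by
      rw [← h1, smul_smul]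
      norm_num [Complex.I_mul_I]
    set p : ℂ := dotProduct (φ x) (star (φ x)) with hp'
    set q : ℂ := dotProduct (β.mulVec (φ x)) (star (φ x)) with hq'
    have hp : star p = p := by
      have := star_dot_herm (Matrix.isHermitian_one (n := Fin N) (α := ℂ)) (φ x) (φ x)
      rwa [Matrix.one_mulVec] at this
    have hq : star q = q := star_dot_herm hβherm (φ x) (φ x)
    have hT : ∑ j, dotProduct ((α j).mulVec (d j)) (star (φ x))
        = Complex.I * ((ω:ℂ) * p - c * q) := by
      rw [← sum_dotProduct', ← hSdef, hS]
      rw [smul_dotProduct, sub_dotProduct, smul_dotProduct,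
        smul_dotProduct]
      simp [smul_eq_mul, mul_sub]
      rfl
    calc ∑ j, pderiv' j ⇑(F j) x
        = ∑ j, (dotProduct ((α j).mulVec (d j)) (star (φ x))
            + star (dotProduct ((α j).mulVec (d j)) (star (φ x)))) := by
          refine Finset.sum_congr rfl fun j _ => ?_
          rw [hpd j, star_dot_herm (hαherm j) (d j) (φ x)]
      _ = (∑ j, dotProduct ((α j).mulVec (d j)) (star (φ x)))
            + star (∑ j, dotProduct ((α j).mulVec (d j)) (star (φ x))) := by
          rw [Finset.sum_add_distrib, star_sum]
      _ = 0 := by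
          rw [hT]
          have h2 : star (Complex.I * ((ω:ℂ) * p - c * q))
              = -Complex.I * ((ω:ℂ) * p - c * q) := by
            have hsc : star c = c := by
              rw [hc]; exact Complex.conj_ofReal _
            have hsw : star ((ω:ℂ)) = (ω:ℂ) := Complex.conj_ofReal _
            have hsI : star Complex.I = -Complex.I := by
              simp [Complex.conj_I]
            rw [star_mul', star_sub, star_mul', star_mul', hp, hq, hsc, hsw, hsI]
          rw [h2]
          ring
  -- multiply by the coordinate `x k`
  set G : Fin n → SchwartzMap (Fin n → ℝ) ℂ :=
    fun j => SchwartzMap.bilinLeftCLM smulCLM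
      (ContinuousLinearMap.proj (R := ℝ) (φ := fun _ : Fin n => ℝ) k).hasTemperateGrowth
      (F j) with hG
  have hGfun : ∀ j, ⇑(G j) = fun y =>
      smulCLM (F j y) ((ContinuousLinearMap.proj (R := ℝ) (φ := fun _ : Fin n => ℝ) k) y) :=
    fun j => rfl
  have hGder : ∀ x, ∑ j, pderiv' j ⇑(G j) x = F k x := by
    intro x
    have h1 : ∀ j, pderiv' j ⇑(G j) x
        = (Pi.single (M := fun _ : Fin n => ℝ) j 1 k) • (F j x) + (x k) • pderiv' j ⇑(F j) x := by
      intro j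
      rw [hGfun j, pderiv_bilin smulCLM j (F j).differentiableAt.hasFDerivAt
        (ContinuousLinearMap.proj (R := ℝ) (φ := fun _ : Fin n => ℝ) k).hasFDerivAt]
      simp only [smulCLM_apply, ContinuousLinearMap.proj_apply, pderiv']
      abel
    rw [Finset.sum_congr rfl fun j _ => h1 j, Finset.sum_add_distrib, ← Finset.smul_sum,
      hdiv x, smul_zero, add_zero]
    have h2 : ∀ j, (Pi.single (M := fun _ : Fin n => ℝ) j 1 k) • (F j x)
        = if k = j then F j x else 0 := by
      intro j
      rw [Pi.single_apply]
      split_ifs with h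
      · rw [one_smul]
      · rw [zero_smul]
    rw [Finset.sum_congr rfl fun j _ => h2 j]
    simp
  -- integrate
  have hFk0 : (∫ x : Fin n → ℝ, F k x) = 0 := by
    have hstep : (∫ x : Fin n → ℝ, F k x)
        = ∑ j, ∫ x : Fin n → ℝ, pderiv' j ⇑(G j) x := by
      rw [← integral_finset_sum]
      · exact integral_congr_ae (Filter.Eventually.of_forall fun x => (hGder x).symm)
      · intro j _
        exact (SchwartzMap.evalCLM ℝ _ _ (Pi.single j 1) (SchwartzMap.fderivCLM ℝ _ _ (G j))).integrable
    rw [hstep]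
    exact Finset.sum_eq_zero fun j _ => integral_pderiv (G j) j
  have hpart1 : (∫ x : Fin n → ℝ,
      dotProduct (star (φ x)) ((α k).mulVec (φ x))) = 0 := by
    rw [← hFk0]
    refine integral_congr_ae (Filter.Eventually.of_forall fun x => ?_)
    rw [hFapp k x, dotProduct_comm]
  have hpart3 : (∫ x : Fin n → ℝ,
      pderiv' k (fun y => dotProduct (star (φ y)) (φ y)) x) = 0 := by
    set F1 : SchwartzMap (Fin n → ℝ) ℂ := SchwartzMap.bilinLeftCLM (BA 1) htemp φ with hF1
    have hfun : (fun y => dotProduct (star (φ y)) (φ y)) = ⇑F1 := by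
      funext y
      have : F1 y = dotProduct
          ((1 : Matrix (Fin N) (Fin N) ℂ).mulVec (φ y)) (star (φ y)) := BA_apply _ _ _
      rw [this, Matrix.one_mulVec, dotProduct_comm]
    rw [hfun]
    exact integral_pderiv F1 k
  refine ⟨hpart1, ?_, hpart3⟩
  rw [hpart1, hpart3]
  ring
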